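/- Define Ψ(c, μ) := −(2α + 2β − f'(0)) + √Δ∞(μ) − 2μc for c > 0 and μ ≥ 0, where Δ∞(μ) := (2α − 2β + f'(0))² + 8αβ(1 + cosh μ). There exist c_*^∞ > 0 and μ_* > 0 such that Ψ(c_*^∞, μ_*) = 0 and ∂Ψ/∂μ (c_*^∞, μ_*) = 0; moreover: (i) if 0 < c < c_*^∞, then Ψ(c, μ) > 0 for all μ > 0; (ii) if c > c_*^∞, then the equation Ψ(c, μ) = 0 has exactly two positive roots μ₁(c) < μ_* < μ₂(c), with Ψ(c, ·) < 0 on (μ₁(c), μ₂(c)) and Ψ(c, ·) > 0 on (0, μ₁(c)) ∪ (μ₂(c), +∞). In particular c_*^∞ = min_{μ>0} (−(2α + 2β − f'(0)) + √Δ∞(μ))/(2μ) is well defined. -/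

import Mathlib

open Set Filter

noncomputable section

/-- `Δ∞(μ) = (2α − 2β + f'(0))² + 8αβ(1 + cosh μ)`, where `r` stands for `f'(0)`. -/
def ΔInf (α β r mu : ℝ) : ℝ :=
  (2 * α - 2 * β + r) ^ 2 + 8 * α * β * (1 + Real.cosh mu)

/-- `Ψ(c,μ) = −(2α + 2β − f'(0)) + √Δ∞(μ) − 2μc`. -/
def PsiInf (α β r c mu : ℝ) : ℝ :=
  -(2 * α + 2 * β - r) + Real.sqrt (ΔInf α β r mu) - 2 * mu * c

/-!
Write `Ψ(c, μ) = φ(μ) - 2μc` with `φ(μ) = -(2α + 2β - f'(0)) + √Δ∞(μ)`. Since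
`Δ∞(μ) ≥ Δ∞(0) = (2α + 2β - f'(0))² + 8α f'(0)`, `φ` is positive; it is strictly convex and grows
like `e^{μ/2}`. Hence the speed `φ(μ)/(2μ)` tends to `+∞` at both ends of `(0, ∞)` and attains its
minimum `c_*^∞` at some `μ_*`. As `Ψ(c, μ) = 2μ(φ(μ)/(2μ) - c)`, `Ψ(c, ·) > 0` for `c < c_*^∞`, and
`Ψ(c_*^∞, ·) ≥ 0 = Ψ(c_*^∞, μ_*)` near `μ_*`, so `μ_*` is critical. For `c > c_*^∞` the strictly
convex function `Ψ(c, ·)` is positive at `0` and at large `μ` but negative at `μ_*`, so it has one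
zero on each side of `μ_*` and the sign pattern `+ - +`.
-/

open Real Topology

namespace StrictConvexOn

variable {s : Set ℝ} {f : ℝ → ℝ} {x y z : ℝ}

protected lemma continuous (hf : StrictConvexOn ℝ univ f) : Continuous f :=
  continuousOn_univ.1 (hf.convexOn.continuousOn isOpen_univ)

lemma neg_of_mem_Ioo (hf : StrictConvexOn ℝ s f) (hx : x ∈ s) (hz : z ∈ s)
    (hfx : f x = 0) (hfz : f z = 0) (hy : y ∈ Ioo x z) : f y < 0 := by
  have hxz := hy.1.trans hy.2
  simpa [hfx, hfz] using hf.lt_on_openSegment hx hz hxz.ne (by rwa [openSegment_eq_Ioo hxz])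

lemma pos_of_lt_of_eq_zero (hf : StrictConvexOn ℝ s f) (hx : x ∈ s) (hz : z ∈ s)
    (hxy : x < y) (hyz : y < z) (hfy : f y = 0) (hfz : f z = 0) : 0 < f x := by
  have := hf.lt_on_openSegment hx hz (hxy.trans hyz).ne
    (by rw [openSegment_eq_Ioo (hxy.trans hyz)]; exact ⟨hxy, hyz⟩)
  simpa [hfy, hfz] using this

lemma pos_of_eq_zero_of_lt (hf : StrictConvexOn ℝ s f) (hx : x ∈ s) (hz : z ∈ s)
    (hxy : x < y) (hyz : y < z) (hfx : f x = 0) (hfy : f y = 0) : 0 < f z := by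
  have := hf.lt_on_openSegment hz hx (hxy.trans hyz).ne'
    (by rw [openSegment_symm, openSegment_eq_Ioo (hxy.trans hyz)]; exact ⟨hxy, hyz⟩)
  simpa [hfx, hfy] using this

theorem exists_two_zeros (hf : StrictConvexOn ℝ univ f) {a m b : ℝ} (ham : a < m) (hmb : m < b)
    (ha : 0 < f a) (hm : f m < 0) (hb : 0 < f b) :
    ∃ x y, a < x ∧ x < m ∧ m < y ∧ f x = 0 ∧ f y = 0 ∧ (∀ z ∈ Ioo x y, f z < 0) ∧
      (∀ z < x, 0 < f z) ∧ ∀ z, y < z → 0 < f z := by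
  obtain ⟨x, ⟨hax, hxm⟩, hfx⟩ := intermediate_value_Ioo' ham.le hf.continuous.continuousOn ⟨hm, ha⟩
  obtain ⟨y, ⟨hmy, -⟩, hfy⟩ := intermediate_value_Ioo hmb.le hf.continuous.continuousOn ⟨hm, hb⟩
  have hxy := hxm.trans hmy
  exact ⟨x, y, hax, hxm, hmy, hfx, hfy, fun z => hf.neg_of_mem_Ioo trivial trivial hfx hfy,
    fun z hz => hf.pos_of_lt_of_eq_zero trivial trivial hz hxy hfx hfy,
    fun z hz => hf.pos_of_eq_zero_of_lt trivial trivial hxy hz hfx hfy⟩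

end StrictConvexOn

lemma exists_isMinOn_Ioi_zero {g : ℝ → ℝ} (hg : ContinuousOn g (Ioi 0))
    (h0 : Tendsto g (𝓝[>] 0) atTop) (htop : Tendsto g atTop atTop) :
    ∃ x, 0 < x ∧ IsMinOn g (Ioi 0) x := by
  have hcont : Continuous (g ∘ exp) := hg.comp_continuous continuous_exp exp_pos
  have hlim : Tendsto (g ∘ exp) (cocompact ℝ) atTop := by
    rw [cocompact_eq_atBot_atTop]
    exact (h0.comp tendsto_exp_atBot_nhdsGT).sup (htop.comp tendsto_exp_atTop)
  obtain ⟨t, ht⟩ := hcont.exists_forall_le hlim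
  refine ⟨exp t, exp_pos t, isMinOn_iff.2 fun y hy => ?_⟩
  simpa [exp_log (mem_Ioi.1 hy)] using ht (log y)

def waveSpeed (φ : ℝ → ℝ) (μ : ℝ) : ℝ := φ μ / (2 * μ)

section WaveSpeed

variable {φ : ℝ → ℝ} {μ μs c : ℝ}

lemma sub_two_mul_mul_eq_mul_waveSpeed_sub (hμ : 0 < μ) (c : ℝ) :
    φ μ - 2 * μ * c = 2 * μ * (waveSpeed φ μ - c) := by
  rw [mul_sub, waveSpeed, mul_div_cancel₀ _ (by positivity)]

lemma sub_two_mul_mul_waveSpeed_self (hμ : 0 < μ) : φ μ - 2 * μ * waveSpeed φ μ = 0 := by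
  rw [sub_two_mul_mul_eq_mul_waveSpeed_sub hμ, sub_self, mul_zero]

lemma tendsto_waveSpeed_nhdsGT_zero (hφ : ContinuousAt φ 0) (h0 : 0 < φ 0) :
    Tendsto (waveSpeed φ) (𝓝[>] 0) atTop := by
  have hφ0 : Tendsto (fun μ => φ μ / 2) (𝓝[>] 0) (𝓝 (φ 0 / 2)) :=
    (hφ.tendsto.div_const 2).mono_left nhdsWithin_le_nhds
  exact (hφ0.pos_mul_atTop (half_pos h0) tendsto_inv_nhdsGT_zero).congr fun μ => by
    rw [waveSpeed]; ring

lemma tendsto_waveSpeed_atTop (htop : Tendsto (fun μ => φ μ / μ) atTop atTop) :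
    Tendsto (waveSpeed φ) atTop atTop :=
  (htop.atTop_div_const two_pos).congr fun μ => by rw [waveSpeed]; ring

lemma exists_isMinOn_waveSpeed (hφ : Continuous φ) (h0 : 0 < φ 0)
    (htop : Tendsto (fun μ => φ μ / μ) atTop atTop) :
    ∃ μ, 0 < μ ∧ IsMinOn (waveSpeed φ) (Ioi 0) μ :=
  exists_isMinOn_Ioi_zero
    (hφ.continuousOn.div (by fun_prop) fun μ hμ => (mul_pos two_pos hμ).ne')
    (tendsto_waveSpeed_nhdsGT_zero hφ.continuousAt h0) (tendsto_waveSpeed_atTop htop)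

lemma isLocalMin_sub_of_isMinOn_waveSpeed (hμs : 0 < μs)
    (hmin : IsMinOn (waveSpeed φ) (Ioi 0) μs) :
    IsLocalMin (fun μ => φ μ - 2 * μ * waveSpeed φ μs) μs := by
  filter_upwards [Ioi_mem_nhds hμs] with μ (hμ : 0 < μ)
  rw [sub_two_mul_mul_waveSpeed_self hμs, sub_two_mul_mul_eq_mul_waveSpeed_sub hμ]
  exact mul_nonneg (by positivity) (sub_nonneg.2 (hmin hμ))

lemma sub_pos_of_lt_waveSpeed (hmin : IsMinOn (waveSpeed φ) (Ioi 0) μs)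
    (hc : c < waveSpeed φ μs) (hμ : 0 < μ) : 0 < φ μ - 2 * μ * c := by
  rw [sub_two_mul_mul_eq_mul_waveSpeed_sub hμ]
  exact mul_pos (by positivity) (sub_pos.2 (hc.trans_le (hmin hμ)))

theorem exists_two_zeros_of_waveSpeed_lt (hφ : StrictConvexOn ℝ univ φ) (h0 : 0 < φ 0)
    (htop : Tendsto (fun μ => φ μ / μ) atTop atTop) (hμs : 0 < μs) (hc : waveSpeed φ μs < c) :
    ∃ μ₁ μ₂, 0 < μ₁ ∧ μ₁ < μs ∧ μs < μ₂ ∧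
      φ μ₁ - 2 * μ₁ * c = 0 ∧ φ μ₂ - 2 * μ₂ * c = 0 ∧
      (∀ μ ∈ Ioo μ₁ μ₂, φ μ - 2 * μ * c < 0) ∧
      (∀ μ ∈ Ioo 0 μ₁, 0 < φ μ - 2 * μ * c) ∧
      (∀ μ, μ₂ < μ → 0 < φ μ - 2 * μ * c) := by
  have hlin : ConcaveOn ℝ univ fun μ : ℝ => 2 * μ * c :=
    ⟨convex_univ, fun _ _ _ _ _ _ _ _ _ => le_of_eq (by simp only [smul_eq_mul]; ring)⟩
  have hneg : φ μs - 2 * μs * c < 0 := by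
    rw [sub_two_mul_mul_eq_mul_waveSpeed_sub hμs]
    exact mul_neg_of_pos_of_neg (by positivity) (sub_neg.2 hc)
  obtain ⟨b, hb, hμsb⟩ :=
    (((tendsto_waveSpeed_atTop htop).eventually_gt_atTop c).and (eventually_gt_atTop μs)).exists
  have hpos : 0 < φ b - 2 * b * c := by
    rw [sub_two_mul_mul_eq_mul_waveSpeed_sub (hμs.trans hμsb)]
    exact mul_pos (by linarith) (sub_pos.2 hb)
  obtain ⟨μ₁, μ₂, h0μ₁, hμ₁, hμ₂, h₁, h₂, hmid, hleft, hright⟩ :=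
    (hφ.sub_concaveOn hlin).exists_two_zeros hμs hμsb (by simpa using h0) hneg hpos
  exact ⟨μ₁, μ₂, h0μ₁, hμ₁, hμ₂, h₁, h₂, hmid, fun μ hμ => hleft μ hμ.2, hright⟩

end WaveSpeed

section SqrtCosh

variable {K L : ℝ}

lemma hasDerivAt_sqrt_add_mul_cosh (hK : 0 ≤ K) (hL : 0 < L) (μ : ℝ) :
    HasDerivAt (fun μ => √(K + L * cosh μ)) (L * sinh μ / (2 * √(K + L * cosh μ))) μ :=
  (((hasDerivAt_cosh μ).const_mul L).const_add K).sqrt (by positivity)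

lemma strictConvexOn_sqrt_add_mul_cosh (hK : 0 ≤ K) (hL : 0 < L) :
    StrictConvexOn ℝ univ fun μ => √(K + L * cosh μ) := by
  refine strictConvexOn_univ_of_deriv2_pos (by fun_prop) fun μ => ?_
  set h := √(K + L * cosh μ)
  have hh : 0 < h := by positivity
  have hsq : h ^ 2 = K + L * cosh μ := sq_sqrt (by positivity)
  have hderiv : deriv (fun μ => √(K + L * cosh μ)) =
      fun μ => L * sinh μ / (2 * √(K + L * cosh μ)) :=
    funext fun μ => (hasDerivAt_sqrt_add_mul_cosh hK hL μ).deriv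
  have h2 : HasDerivAt (fun μ => L * sinh μ / (2 * √(K + L * cosh μ)))
      ((L * cosh μ * (2 * h) - L * sinh μ * (2 * (L * sinh μ / (2 * h)))) / (2 * h) ^ 2) μ :=
    ((hasDerivAt_sinh μ).const_mul L).div ((hasDerivAt_sqrt_add_mul_cosh hK hL μ).const_mul 2)
      (by positivity)
  rw [Function.iterate_succ_apply, Function.iterate_one, hderiv, h2.deriv]
  have key : 0 < 2 * L * cosh μ * h ^ 2 - L ^ 2 * sinh μ ^ 2 :=
    calc 0 < 2 * L * K * cosh μ + (L * cosh μ) ^ 2 + L ^ 2 := by positivity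
      _ = _ := by rw [hsq, sinh_sq]; ring
  apply div_pos _ (by positivity)
  rw [show L * cosh μ * (2 * h) - L * sinh μ * (2 * (L * sinh μ / (2 * h))) =
    (2 * L * cosh μ * h ^ 2 - L ^ 2 * sinh μ ^ 2) / h by field_simp]
  positivity

lemma mul_exp_half_le_sqrt_add_mul_cosh (hK : 0 ≤ K) (hL : 0 < L) (μ : ℝ) :
    √(L / 2) * exp (μ / 2) ≤ √(K + L * cosh μ) := by
  rw [exp_half, ← sqrt_mul (by positivity)]
  refine sqrt_le_sqrt ?_
  rw [cosh_eq]
  nlinarith [mul_pos hL (exp_pos (-μ))]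

lemma tendsto_sqrt_add_mul_cosh_div_atTop (hK : 0 ≤ K) (hL : 0 < L) :
    Tendsto (fun μ => √(K + L * cosh μ) / μ) atTop atTop := by
  have hexp := (tendsto_exp_mul_div_rpow_atTop 1 (1 / 2) one_half_pos).const_mul_atTop
    (sqrt_pos.2 (half_pos hL))
  refine tendsto_atTop_mono' atTop ?_ hexp
  filter_upwards [eventually_gt_atTop 0] with μ hμ
  rw [rpow_one, ← mul_div_assoc, one_div_mul_eq_div]
  exact div_le_div_of_nonneg_right (mul_exp_half_le_sqrt_add_mul_cosh hK hL μ) hμ.le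

end SqrtCosh

lemma ΔInf_eq (α β r μ : ℝ) :
    ΔInf α β r μ = ((2 * α - 2 * β + r) ^ 2 + 8 * α * β) + 8 * α * β * cosh μ := by
  unfold ΔInf; ring

section

variable {α β r : ℝ}

lemma strictConvexOn_sqrt_ΔInf (hα : 0 < α) (hβ : 0 < β) :
    StrictConvexOn ℝ univ fun μ => √(ΔInf α β r μ) := by
  simpa only [ΔInf_eq] using strictConvexOn_sqrt_add_mul_cosh (by positivity) (by positivity)

lemma tendsto_sqrt_ΔInf_div_atTop (hα : 0 < α) (hβ : 0 < β) :
    Tendsto (fun μ => √(ΔInf α β r μ) / μ) atTop atTop := by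
  simpa only [ΔInf_eq] using tendsto_sqrt_add_mul_cosh_div_atTop (by positivity) (by positivity)

lemma lt_sqrt_ΔInf (hα : 0 < α) (hβ : 0 < β) (hr : 0 < r) (μ : ℝ) :
    2 * α + 2 * β - r < √(ΔInf α β r μ) := by
  refine lt_sqrt_of_sq_lt ?_
  unfold ΔInf
  nlinarith [one_le_cosh μ, mul_pos hα hr, mul_pos hα hβ]

end

theorem asymptotic_speed_well_defined_general
    (α β : ℝ) (hα : 0 < α) (hβ : 0 < β)
    (f : ℝ → ℝ)
    (hr : 0 < deriv f 0) :
    ∃ cstar mustar : ℝ, 0 < cstar ∧ 0 < mustar ∧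
      PsiInf α β (deriv f 0) cstar mustar = 0 ∧
      deriv (fun mu => PsiInf α β (deriv f 0) cstar mu) mustar = 0 ∧
      (∀ c : ℝ, 0 < c → c < cstar → ∀ mu : ℝ, 0 < mu →
        0 < PsiInf α β (deriv f 0) c mu) ∧
      (∀ c : ℝ, cstar < c → ∃ mu₁ mu₂ : ℝ,
        0 < mu₁ ∧ mu₁ < mustar ∧ mustar < mu₂ ∧
        PsiInf α β (deriv f 0) c mu₁ = 0 ∧ PsiInf α β (deriv f 0) c mu₂ = 0 ∧
        (∀ mu ∈ Ioo mu₁ mu₂, PsiInf α β (deriv f 0) c mu < 0) ∧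
        (∀ mu ∈ Ioo 0 mu₁, 0 < PsiInf α β (deriv f 0) c mu) ∧
        (∀ mu : ℝ, mu₂ < mu → 0 < PsiInf α β (deriv f 0) c mu)) ∧
      (∀ mu : ℝ, 0 < mu →
        cstar ≤ (-(2 * α + 2 * β - deriv f 0) + Real.sqrt (ΔInf α β (deriv f 0) mu))
          / (2 * mu)) ∧
      (∃ mu : ℝ, 0 < mu ∧
        cstar = (-(2 * α + 2 * β - deriv f 0) + Real.sqrt (ΔInf α β (deriv f 0) mu))
          / (2 * mu)) := by
  set φ : ℝ → ℝ := fun μ => -(2 * α + 2 * β - deriv f 0) + √(ΔInf α β (deriv f 0) μ)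
  have hφ : StrictConvexOn ℝ univ φ :=
    (convexOn_const _ convex_univ).add_strictConvexOn (strictConvexOn_sqrt_ΔInf hα hβ)
  have hφpos (μ : ℝ) : 0 < φ μ := by linarith [lt_sqrt_ΔInf hα hβ hr μ]
  have hφtop : Tendsto (fun μ => φ μ / μ) atTop atTop :=
    ((tendsto_const_nhds.div_atTop tendsto_id).add_atTop
      (tendsto_sqrt_ΔInf_div_atTop hα hβ)).congr fun μ => (add_div _ _ _).symm
  obtain ⟨μs, hμs, hmin⟩ := exists_isMinOn_waveSpeed hφ.continuous (hφpos 0) hφtop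
  exact ⟨waveSpeed φ μs, μs, div_pos (hφpos μs) (by positivity), hμs,
    sub_two_mul_mul_waveSpeed_self (φ := φ) hμs,
    (isLocalMin_sub_of_isMinOn_waveSpeed hμs hmin).deriv_eq_zero,
    fun c _ hc μ hμ => sub_pos_of_lt_waveSpeed hmin hc hμ,
    fun c hc => exists_two_zeros_of_waveSpeed_lt hφ (hφpos 0) hφtop hμs hc,
    fun μ hμ => hmin hμ, μs, hμs, rfl⟩

/-- **The asymptotic spreading speed `c_*^∞` is well defined**: there exist `c_*^∞ > 0` and
`μ_* > 0` with `Ψ(c_*^∞, μ_*) = 0`, `∂_μ Ψ(c_*^∞, μ_*) = 0`; for `0 < c < c_*^∞` one has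
`Ψ(c,·) > 0` on `(0,∞)`, while for `c > c_*^∞` the equation `Ψ(c,μ) = 0` has exactly two
positive roots `μ₁ < μ_* < μ₂` with `Ψ(c,·) < 0` on `(μ₁,μ₂)` and `Ψ(c,·) > 0` on
`(0,μ₁) ∪ (μ₂,∞)`; in particular `c_*^∞ = min_{μ>0} (−(2α+2β−f'(0)) + √Δ∞(μ))/(2μ)`. -/
theorem asymptotic_speed_well_defined
    (α β : ℝ) (hα : 0 < α) (hβ : 0 < β)
    (f : ℝ → ℝ) (hf : ContDiff ℝ 1 f) (hf0 : f 0 = 0) (hf1 : f 1 = 0)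
    (hfpos : ∀ u ∈ Ioo (0:ℝ) 1, 0 < f u ∧ f u ≤ deriv f 0 * u)
    (hr : 0 < deriv f 0) :
    ∃ cstar mustar : ℝ, 0 < cstar ∧ 0 < mustar ∧
      PsiInf α β (deriv f 0) cstar mustar = 0 ∧
      deriv (fun mu => PsiInf α β (deriv f 0) cstar mu) mustar = 0 ∧
      (∀ c : ℝ, 0 < c → c < cstar → ∀ mu : ℝ, 0 < mu →
        0 < PsiInf α β (deriv f 0) c mu) ∧
      (∀ c : ℝ, cstar < c → ∃ mu₁ mu₂ : ℝ,
        0 < mu₁ ∧ mu₁ < mustar ∧ mustar < mu₂ ∧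
        PsiInf α β (deriv f 0) c mu₁ = 0 ∧ PsiInf α β (deriv f 0) c mu₂ = 0 ∧
        (∀ mu ∈ Ioo mu₁ mu₂, PsiInf α β (deriv f 0) c mu < 0) ∧
        (∀ mu ∈ Ioo 0 mu₁, 0 < PsiInf α β (deriv f 0) c mu) ∧
        (∀ mu : ℝ, mu₂ < mu → 0 < PsiInf α β (deriv f 0) c mu)) ∧
      (∀ mu : ℝ, 0 < mu →
        cstar ≤ (-(2 * α + 2 * β - deriv f 0) + Real.sqrt (ΔInf α β (deriv f 0) mu))
          / (2 * mu)) ∧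
      (∃ mu : ℝ, 0 < mu ∧
        cstar = (-(2 * α + 2 * β - deriv f 0) + Real.sqrt (ΔInf α β (deriv f 0) mu))
          / (2 * mu)) :=
  asymptotic_speed_well_defined_general α β hα hβ f hr
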